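/- arXiv:2604.10826 — 2 statements merged into one kernel-verified Lean document; each statement's English description precedes it below -/
import Mathlib

section
/- Assume κ is an infinite cardinal with κ^{<κ} = κ. Then there is an antichain of size 2^κ in the forcing notion P(F*_κ): there exist 2^κ many conditions in P(F*_κ) that are pairwise incompatible. -/
open Cardinal Set

universe u

/-- A node of the tree `^{<κ}κ`: a function from an ordinal `dom < κ` (identified with
`κ.ord`) to ordinals `< κ.ord`, normalized to take value `0` outside its domain. -/
structure KNode (κ : Cardinal.{u}) : Type (u + 1) where
  dom : Ordinal.{u}
  dom_lt : dom < κ.ord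
  val : Ordinal.{u} → Ordinal.{u}
  val_lt : ∀ i, i < dom → val i < κ.ord
  val_zero : ∀ i, ¬ i < dom → val i = 0

namespace KNode

variable {κ : Cardinal.{u}}

/-- The restriction `s↾β` of a node `s` to a domain `β ≤ dom s`. -/
noncomputable def restrict (s : KNode κ) (β : Ordinal.{u}) (h : β ≤ s.dom) : KNode κ where
  dom := β
  dom_lt := lt_of_le_of_lt h s.dom_lt
  val := fun i => if i < β then s.val i else 0
  val_lt := fun i hi => by
    simp only [if_pos hi]; exact s.val_lt i (lt_of_lt_of_le hi h)
  val_zero := fun i hi => if_neg hi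

end KNode

/-- `p` is a subtree of `^{<κ}κ`: a nonempty set of nodes closed under restriction. -/
def IsSubtree {κ : Cardinal.{u}} (p : Set (KNode κ)) : Prop :=
  p.Nonempty ∧ ∀ s ∈ p, ∀ (β : Ordinal.{u}) (h : β ≤ s.dom), s.restrict β h ∈ p

/-- The set `{α < κ : s⌢⟨α⟩ ∈ p}` of immediate successor values of `s` in `p`. -/
def succSet {κ : Cardinal.{u}} (p : Set (KNode κ)) (s : KNode κ) : Set Ordinal.{u} :=
  {a | ∃ t ∈ p, t.dom = s.dom + 1 ∧ (∀ i, i < s.dom → t.val i = s.val i) ∧ t.val s.dom = a}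

/-- `s` is `F`-splitting in `p` if `{α < κ : s⌢⟨α⟩ ∈ p} ∈ F`. -/
def IsSplitting {κ : Cardinal.{u}} (F : Set (Set Ordinal.{u})) (p : Set (KNode κ))
    (s : KNode κ) : Prop :=
  succSet p s ∈ F

/-- The splitting history `deg_p(s) = {i < dom s : ∃ t ∈ p, t↾i = s↾i ∧ t i ≠ s i}`. -/
def deg {κ : Cardinal.{u}} (p : Set (KNode κ)) (s : KNode κ) : Set Ordinal.{u} :=
  {i | i < s.dom ∧ ∃ t ∈ p, i < t.dom ∧ (∀ j, j < i → t.val j = s.val j) ∧ t.val i ≠ s.val i}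

/-- `A` is a closed subset of the ordinal `δ` (in the order topology): every limit point
below `δ` of elements of `A` belongs to `A`. -/
def OrdClosedBelow (A : Set Ordinal.{u}) (δ : Ordinal.{u}) : Prop :=
  ∀ β, β < δ → Order.IsSuccLimit β → (∀ γ, γ < β → ∃ i ∈ A, γ < i ∧ i < β) → β ∈ A

/-- `p` is an `F`-perfect subtree of `^{<κ}κ`. -/
def IsFPerfect (κ : Cardinal.{u}) (F : Set (Set Ordinal.{u})) (p : Set (KNode κ)) : Prop :=
  IsSubtree p ∧
  (∀ β, β < κ.ord → ∃ s ∈ p, β ≤ s.dom) ∧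
  (∀ s ∈ p, ∃ t ∈ p, s.dom ≤ t.dom ∧ (∀ i, i < s.dom → t.val i = s.val i) ∧
    IsSplitting F p t) ∧
  (∀ s : KNode κ, Order.IsSuccLimit s.dom → (∀ β (h : β < s.dom), s.restrict β h.le ∈ p) → s ∈ p)

/-- The forcing notion `P(F)`: `F`-perfect trees satisfying (o) every successor set is a
singleton or a member of `F`, and (i) every splitting history is closed. A condition `q`
is stronger than `p` (`q ≥ p`) iff `q ⊆ p`. -/
def PF (κ : Cardinal.{u}) (F : Set (Set Ordinal.{u})) : Set (Set (KNode κ)) :=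
  {p | IsFPerfect κ F p ∧
    (∀ s ∈ p, (∃ a, succSet p s = {a}) ∨ succSet p s ∈ F) ∧
    (∀ s ∈ p, OrdClosedBelow (deg p s) s.dom)}

/-- Incompatibility of conditions in `P(F)`: no common extension. -/
def Incompat (κ : Cardinal.{u}) (F : Set (Set Ordinal.{u})) (p q : Set (KNode κ)) : Prop :=
  ¬ ∃ r ∈ PF κ F, r ⊆ p ∧ r ⊆ q

/-- The co-bounded filter `F*_κ` on `κ`: sets `A ⊆ κ` with `|κ \ A| < κ`. -/
def cobounded (κ : Cardinal.{u}) : Set (Set Ordinal.{u}) :=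
  {A | A ⊆ Set.Iio κ.ord ∧ #(↥(Set.Iio κ.ord \ A)) < Cardinal.lift.{u + 1} κ}

/-- `F` is a `(<κ)`-complete filter on `κ`. -/
def IsKappaCompleteFilterOn (κ : Cardinal.{u}) (F : Set (Set Ordinal.{u})) : Prop :=
  (∀ A ∈ F, A ⊆ Set.Iio κ.ord) ∧
  Set.Iio κ.ord ∈ F ∧
  (∀ A ∈ F, ∀ B, A ⊆ B → B ⊆ Set.Iio κ.ord → B ∈ F) ∧
  (∀ (ι : Type u) (f : ι → Set Ordinal.{u}), Nonempty ι → #ι < κ →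
    (∀ i, f i ∈ F) → (⋂ i, f i) ∈ F)

/-- `g : κ → κ` is a κ-branch of `q`: every restriction `g↾α`, `α < κ`, is a node of `q`. -/
def IsBranch {κ : Cardinal.{u}} (q : Set (KNode κ)) (g : Ordinal.{u} → Ordinal.{u}) : Prop :=
  ∀ α, α < κ.ord → ∃ s ∈ q, s.dom = α ∧ ∀ i, i < α → s.val i = g i

/-- `C` is a club (closed unbounded set) in `δ`. -/
def IsClubBelow (C : Set Ordinal.{u}) (δ : Ordinal.{u}) : Prop :=
  C ⊆ Set.Iio δ ∧ (∀ β, β < δ → ∃ i ∈ C, β < i) ∧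
  ∀ β, β < δ → Order.IsSuccLimit β → (∀ γ, γ < β → ∃ i ∈ C, γ < i ∧ i < β) → β ∈ C

/-- The dense set `D_f = {p ∈ P(F*_κ) : ∀ s ∈ p, ∀ i ∈ deg_p(s), s(i) > f(i)}`. -/
def Dset (κ : Cardinal.{u}) (f : Ordinal.{u} → Ordinal.{u}) : Set (Set (KNode κ)) :=
  {p | p ∈ PF κ (cobounded κ) ∧ ∀ s ∈ p, ∀ i ∈ deg p s, f i < s.val i}

/-!
Code a set `X ⊆ κ` by the tree of all nodes taking the value `1_X(j)` at every odd level
`2 * j + 1` and arbitrary values elsewhere (every ordinal is `2 * β` or `2 * β + 1`, and the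
limits are even). The even levels are fully splitting, so the tree is a condition; its
splitting histories are the even levels and hence closed. Two trees coding different sets
prescribe different values at some odd level, so no condition, which has nodes of every height
below `κ`, lies in both; in particular the coding is injective.
-/

open Ordinal

namespace KNode

variable {κ : Cardinal.{u}}

def nil (h : 0 < κ.ord) : KNode κ where
  dom := 0
  dom_lt := h
  val _ := 0
  val_lt _ hi := (not_lt_zero hi).elim
  val_zero _ _ := rfl

noncomputable def extend (s : KNode κ) (β : Ordinal.{u}) (hβ : β < κ.ord)
    (f : Ordinal.{u} → Ordinal.{u}) (hf : ∀ i, f i < κ.ord) : KNode κ where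
  dom := β
  dom_lt := hβ
  val i := if i < β then (if i < s.dom then s.val i else f i) else 0
  val_lt i hi := by
    rw [if_pos hi]
    split_ifs with h
    exacts [s.val_lt i h, hf i]
  val_zero _ hi := if_neg hi

variable {s : KNode κ} {β i : Ordinal.{u}}

@[simp]
theorem extend_dom (hβ : β < κ.ord) (f : Ordinal.{u} → Ordinal.{u}) (hf : ∀ i, f i < κ.ord) :
    (s.extend β hβ f hf).dom = β :=
  rfl

theorem extend_val_of_lt_dom {hβ : β < κ.ord} {f : Ordinal.{u} → Ordinal.{u}}
    {hf : ∀ i, f i < κ.ord} (hiβ : i < β) (hi : i < s.dom) :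
    (s.extend β hβ f hf).val i = s.val i := by
  simp only [extend, if_pos hiβ, if_pos hi]

theorem extend_val_of_dom_le {hβ : β < κ.ord} {f : Ordinal.{u} → Ordinal.{u}}
    {hf : ∀ i, f i < κ.ord} (hiβ : i < β) (hi : s.dom ≤ i) :
    (s.extend β hβ f hf).val i = f i := by
  simp only [extend, if_pos hiβ, if_neg hi.not_gt]

@[simp]
theorem restrict_dom (h : β ≤ s.dom) : (s.restrict β h).dom = β :=
  rfl

theorem restrict_val_of_lt (h : β ≤ s.dom) (hi : i < β) : (s.restrict β h).val i = s.val i :=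
  if_pos hi

end KNode

section OddLevels

variable {j k : Ordinal.{u}}

theorem two_mul_add_one_injective :
    Function.Injective fun j : Ordinal.{u} => 2 * j + 1 :=
  fun _ _ h => mul_left_cancel₀ two_ne_zero <| Order.succ_injective <| by
    simpa only [Order.succ_eq_add_one] using h

theorem two_mul_add_one_ne_two_mul : 2 * j + 1 ≠ 2 * k := by
  intro h
  have hmod := congrArg (· % 2) h
  simp only [Ordinal.mul_add_mod_self, Ordinal.mul_mod] at hmod
  rw [Ordinal.mod_eq_of_lt one_lt_two] at hmod
  exact one_ne_zero hmod

theorem two_mul_add_one_div_two : (2 * j + 1) / 2 = j := by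
  rw [Ordinal.mul_add_div _ two_ne_zero, Ordinal.div_eq_zero_of_lt one_lt_two, add_zero]

theorem two_mul_add_one_ne_of_isSuccLimit (hk : Order.IsSuccLimit k) : 2 * j + 1 ≠ k := by
  rw [← Order.succ_eq_add_one]
  exact hk.succ_ne _

theorem natCast_lt_ord {κ : Cardinal.{u}} (hκ : ℵ₀ ≤ κ) (n : ℕ) : (n : Ordinal) < κ.ord :=
  (Ordinal.natCast_lt_omega0 n).trans_le (Cardinal.omega0_le_ord.2 hκ)

theorem two_mul_add_one_lt_ord {κ : Cardinal.{u}} (hκ : ℵ₀ ≤ κ) (hj : j < κ.ord) :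
    2 * j + 1 < κ.ord := by
  have h2 : (2 : Ordinal) < κ.ord := by exact_mod_cast natCast_lt_ord hκ 2
  exact (Cardinal.isSuccLimit_ord hκ).add_one_lt (Ordinal.isPrincipal_mul_ord hκ h2 hj)

end OddLevels

variable {κ : Cardinal.{u}}

theorem Iio_ord_mem_cobounded (hκ : ℵ₀ ≤ κ) : Iio κ.ord ∈ cobounded κ := by
  refine ⟨subset_rfl, ?_⟩
  simpa using Cardinal.aleph0_pos.trans_le hκ

theorem not_incompat_self {F : Set (Set Ordinal.{u})} {p : Set (KNode κ)} (hp : p ∈ PF κ F) :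
    ¬ Incompat κ F p p :=
  fun h => h ⟨p, hp, subset_rfl, subset_rfl⟩

theorem Set.Pairwise.injOn_of_incompat {ι : Type*} {F : Set (Set Ordinal.{u})} {S : Set ι}
    {T : ι → Set (KNode κ)} (hT : ∀ i ∈ S, T i ∈ PF κ F)
    (h : S.Pairwise (Function.onFun (Incompat κ F) T)) : Set.InjOn T S := by
  intro i hi i' hi' hii'
  by_contra hne
  have hii := h hi hi' hne
  rw [Function.onFun, ← hii'] at hii
  exact not_incompat_self (hT i hi) hii

def oddLevelTree (κ : Cardinal.{u}) (g : Ordinal.{u} → Ordinal.{u}) : Set (KNode κ) :=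
  {s | ∀ j, 2 * j + 1 < s.dom → s.val (2 * j + 1) = g j}

namespace oddLevelTree

variable {g : Ordinal.{u} → Ordinal.{u}} {s : KNode κ}

theorem nil_mem (h : 0 < κ.ord) : KNode.nil h ∈ oddLevelTree κ g :=
  fun _ hj => (not_lt_zero hj).elim

theorem restrict_mem (hs : s ∈ oddLevelTree κ g) {β : Ordinal.{u}} (h : β ≤ s.dom) :
    s.restrict β h ∈ oddLevelTree κ g := fun j hj => by
  rw [KNode.restrict_val_of_lt h hj]
  exact hs j (hj.trans_le h)

theorem extend_mem (hs : s ∈ oddLevelTree κ g) {β : Ordinal.{u}} (hβ : β < κ.ord)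
    {f : Ordinal.{u} → Ordinal.{u}} (hf : ∀ i, f i < κ.ord)
    (hfg : ∀ j, s.dom ≤ 2 * j + 1 → 2 * j + 1 < β → f (2 * j + 1) = g j) :
    s.extend β hβ f hf ∈ oddLevelTree κ g := fun j hj => by
  rw [KNode.extend_dom] at hj
  rcases lt_or_ge (2 * j + 1) s.dom with hjs | hjs
  · rw [KNode.extend_val_of_lt_dom hj hjs]
    exact hs j hjs
  · rw [KNode.extend_val_of_dom_le hj hjs]
    exact hfg j hjs hj

theorem extend_div_two_mem (hg : ∀ j, g j < κ.ord) (hs : s ∈ oddLevelTree κ g)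
    {β : Ordinal.{u}} (hβ : β < κ.ord) :
    s.extend β hβ (fun i => g (i / 2)) (fun _ => hg _) ∈ oddLevelTree κ g :=
  extend_mem hs hβ _ fun _ _ _ => congrArg g two_mul_add_one_div_two

theorem mem_succSet_iff (hκ : ℵ₀ ≤ κ) (hs : s ∈ oddLevelTree κ g) {a : Ordinal.{u}} :
    a ∈ succSet (oddLevelTree κ g) s ↔ a < κ.ord ∧ ∀ j, 2 * j + 1 = s.dom → a = g j := by
  constructor
  · rintro ⟨t, ht, hdom, -, rfl⟩
    have hlt : s.dom < t.dom := hdom ▸ lt_add_one _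
    exact ⟨t.val_lt _ hlt, fun j hj => hj ▸ ht j (hj ▸ hlt)⟩
  · rintro ⟨ha, hag⟩
    have hd : s.dom + 1 < κ.ord := (Cardinal.isSuccLimit_ord hκ).add_one_lt s.dom_lt
    refine ⟨s.extend (s.dom + 1) hd (fun _ => a) (fun _ => ha), ?_, rfl,
      fun i hi => KNode.extend_val_of_lt_dom (hi.trans (lt_add_one _)) hi,
      KNode.extend_val_of_dom_le (lt_add_one _) le_rfl⟩
    refine extend_mem hs hd _ fun j hsj hjd => hag j ?_
    exact le_antisymm (Order.lt_add_one_iff.1 hjd) hsj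

theorem succSet_eq_Iio (hκ : ℵ₀ ≤ κ) (hs : s ∈ oddLevelTree κ g)
    (h : ∀ j, 2 * j + 1 ≠ s.dom) : succSet (oddLevelTree κ g) s = Iio κ.ord := by
  ext a
  simp only [mem_succSet_iff hκ hs, mem_Iio, and_iff_left_iff_imp]
  exact fun _ j hj => absurd hj (h j)

theorem succSet_eq_singleton (hκ : ℵ₀ ≤ κ) (hg : ∀ j, g j < κ.ord)
    (hs : s ∈ oddLevelTree κ g) {j : Ordinal.{u}} (hj : 2 * j + 1 = s.dom) :
    succSet (oddLevelTree κ g) s = {g j} := by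
  ext a
  rw [mem_succSet_iff hκ hs, mem_singleton_iff]
  refine ⟨fun ⟨_, hag⟩ => hag j hj, ?_⟩
  rintro rfl
  exact ⟨hg j, fun k hk => congrArg g (two_mul_add_one_injective (hk.trans hj.symm)).symm⟩

theorem mem_deg (hκ : ℵ₀ ≤ κ) (hs : s ∈ oddLevelTree κ g) {i : Ordinal.{u}} (hi : i < s.dom)
    (h : ∀ j, 2 * j + 1 ≠ i) : i ∈ deg (oddLevelTree κ g) s := by
  have hr := restrict_mem hs hi.le
  have ha : s.val i + 1 ∈ succSet (oddLevelTree κ g) (s.restrict i hi.le) := by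
    rw [succSet_eq_Iio hκ hr h]
    exact (Cardinal.isSuccLimit_ord hκ).add_one_lt (s.val_lt i hi)
  obtain ⟨t, ht, hdom, hagree, hval⟩ := ha
  refine ⟨hi, t, ht, hdom ▸ lt_add_one _, fun k hk => ?_, ?_⟩
  · rw [hagree k hk, KNode.restrict_val_of_lt hi.le hk]
  · rw [KNode.restrict_dom] at hval
    exact hval ▸ (lt_add_one _).ne'

theorem mem_PF (hκ : ℵ₀ ≤ κ) (hg : ∀ j, g j < κ.ord) :
    oddLevelTree κ g ∈ PF κ (cobounded κ) := by
  have h0 : 0 < κ.ord := (Cardinal.isSuccLimit_ord hκ).bot_lt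
  have hsplit : ∀ s ∈ oddLevelTree κ g, (∀ j, 2 * j + 1 ≠ s.dom) →
      IsSplitting (cobounded κ) (oddLevelTree κ g) s := fun s hs h => by
    rw [IsSplitting, succSet_eq_Iio hκ hs h]
    exact Iio_ord_mem_cobounded hκ
  refine ⟨⟨⟨⟨_, nil_mem h0⟩, fun s hs β h => restrict_mem hs h⟩, ?_, ?_, ?_⟩, ?_, ?_⟩
  · exact fun β hβ => ⟨_, extend_div_two_mem hg (nil_mem h0) hβ, le_rfl⟩
  · intro s hs
    have hd : 2 * s.dom < κ.ord :=
      Ordinal.isPrincipal_mul_ord hκ (by exact_mod_cast natCast_lt_ord hκ 2) s.dom_lt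
    have ht := extend_div_two_mem hg hs hd
    exact ⟨_, ht, Ordinal.le_mul_right _ two_pos,
      fun i hi => KNode.extend_val_of_lt_dom (hi.trans_le (Ordinal.le_mul_right _ two_pos)) hi,
      hsplit _ ht fun j => two_mul_add_one_ne_two_mul⟩
  · intro s hlim hres j hj
    have := hres _ (hlim.add_one_lt hj) j (lt_add_one _)
    rwa [KNode.restrict_val_of_lt _ (lt_add_one _)] at this
  · intro s hs
    by_cases h : ∃ j, 2 * j + 1 = s.dom
    · obtain ⟨j, hj⟩ := h
      exact Or.inl ⟨g j, succSet_eq_singleton hκ hg hs hj⟩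
    · exact Or.inr (hsplit s hs (not_exists.1 h))
  · exact fun s hs β hβ hlim _ =>
      mem_deg hκ hs hβ fun j => two_mul_add_one_ne_of_isSuccLimit hlim

theorem incompat {F : Set (Set Ordinal.{u})} (hκ : ℵ₀ ≤ κ) {g g' : Ordinal.{u} → Ordinal.{u}}
    {j : Ordinal.{u}} (hj : j < κ.ord) (hne : g j ≠ g' j) :
    Incompat κ F (oddLevelTree κ g) (oddLevelTree κ g') := by
  rintro ⟨r, hr, hrg, hrg'⟩
  have hd := (Cardinal.isSuccLimit_ord hκ).add_one_lt (two_mul_add_one_lt_ord hκ hj)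
  obtain ⟨s, hs, hdom⟩ := hr.1.2.1 _ hd
  have hlt : 2 * j + 1 < s.dom := (lt_add_one _).trans_le hdom
  exact hne ((hrg hs j hlt).symm.trans (hrg' hs j hlt))

end oddLevelTree

theorem indicator_one_lt_ord (hκ : ℵ₀ ≤ κ) (X : Set Ordinal.{u}) (j : Ordinal.{u}) :
    X.indicator 1 j < κ.ord := by
  classical
  have h1 : (1 : Ordinal) < κ.ord := by exact_mod_cast natCast_lt_ord hκ 1
  rw [Set.indicator_apply]
  split_ifs
  exacts [h1, zero_lt_one.trans h1]

theorem exists_mem_indicator_one_ne {S X Y : Set Ordinal.{u}} (hX : X ⊆ S) (hY : Y ⊆ S)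
    (hne : X ≠ Y) : ∃ j ∈ S, X.indicator 1 j ≠ Y.indicator (1 : Ordinal.{u} → Ordinal.{u}) j := by
  obtain ⟨j, hj⟩ := Function.ne_iff.1 (mt (Set.indicator_one_inj Ordinal.{u}) hne)
  refine ⟨j, ?_, hj⟩
  by_contra hjS
  rw [Set.indicator_of_notMem (fun h => hjS (hX h)),
    Set.indicator_of_notMem (fun h => hjS (hY h))] at hj
  exact hj rfl

theorem stmt_0_general (κ : Cardinal.{u}) (hκ : ℵ₀ ≤ κ) :
    ∃ A : Set (Set (KNode κ)), A ⊆ PF κ (cobounded κ) ∧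
      A.Pairwise (Incompat κ (cobounded κ)) ∧
      #A = Cardinal.lift.{u + 1} (2 ^ κ) := by
  set T : Set Ordinal.{u} → Set (KNode κ) := fun X => oddLevelTree κ (X.indicator 1)
  have hT : ∀ X ∈ 𝒫 Iio κ.ord, T X ∈ PF κ (cobounded κ) :=
    fun X _ => oddLevelTree.mem_PF hκ (indicator_one_lt_ord hκ X)
  have hanti : (𝒫 Iio κ.ord).Pairwise (Function.onFun (Incompat κ (cobounded κ)) T) := by
    intro X hX Y hY hne
    obtain ⟨j, hj, hXY⟩ := exists_mem_indicator_one_ne hX hY hne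
    exact oddLevelTree.incompat hκ hj hXY
  refine ⟨T '' 𝒫 Iio κ.ord, Set.image_subset_iff.2 hT, hanti.image, ?_⟩
  rw [Cardinal.mk_image_eq_of_injOn _ _ (hanti.injOn_of_incompat hT), Cardinal.mk_powerset,
    Cardinal.mk_Iio_ordinal, Cardinal.card_ord, Cardinal.lift_two_power]

/-- If `κ` is infinite with `κ^{<κ} = κ`, then there is an antichain of size
`2^κ` in `P(F*_κ)`. -/
theorem stmt_0 (κ : Cardinal.{u}) (hκ : ℵ₀ ≤ κ) (hpow : κ ^< κ = κ) :
    ∃ A : Set (Set (KNode κ)), A ⊆ PF κ (cobounded κ) ∧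
      A.Pairwise (Incompat κ (cobounded κ)) ∧
      #A = Cardinal.lift.{u + 1} (2 ^ κ) :=
  stmt_0_general κ hκ
end

section
/- Assume κ is an infinite cardinal with κ^{<κ} = κ. For every function f : κ → κ, the set D_f is dense in P(F*_κ): for every condition p ∈ P(F*_κ) there exists a condition q ∈ D_f with q ≥ p (that is, q ⊆ p). -/
open Cardinal Set

universe u

/-!
Let `q` consist of the nodes `s ∈ p` with `f i < s i` for every splitting level `i` of `p`
below `dom s`. At a node `s ∈ q` the successor set in `q` is that of `p`, cut down to the
values above `f (dom s)` when `s` splits; since a member of `F*_κ` minus a bounded set is still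
in `F*_κ`, splitting nodes of `p` stay splitting in `q`, and a value above both `f i` and
`s i` always remains available at a splitting level `i`. Hence `q` has the same splitting
histories as `p`, which makes `q` a condition in `D_f`. Closure passes from `p` to `q`
directly, and every height `β < κ` is reached by a maximal chain of nodes of height `≤ β`
(Zorn), whose union lies in `q` by closure.
-/

namespace KNode

variable {κ : Cardinal.{u}}

protected theorem ext {s t : KNode κ} (hdom : s.dom = t.dom)
    (hval : ∀ i < s.dom, s.val i = t.val i) : s = t := by
  obtain ⟨d, hd, v, hv, hz⟩ := s
  obtain ⟨d', hd', v', hv', hz'⟩ := t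
  obtain rfl : d = d' := hdom
  obtain rfl : v = v' := funext fun i => by
    by_cases h : i < d
    · exact hval i h
    · rw [hz i h, hz' i h]
  rfl

/-- The tree order: `s ≤ t` iff `t` extends `s`. -/
instance : PartialOrder (KNode κ) where
  le s t := s.dom ≤ t.dom ∧ ∀ i < s.dom, t.val i = s.val i
  le_refl _ := ⟨le_rfl, fun _ _ => rfl⟩
  le_trans _ _ _ h₁ h₂ :=
    ⟨h₁.1.trans h₂.1, fun i hi => (h₂.2 i (hi.trans_le h₁.1)).trans (h₁.2 i hi)⟩
  le_antisymm _ _ h₁ h₂ := KNode.ext (le_antisymm h₁.1 h₂.1) fun i hi => (h₁.2 i hi).symm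

theorem dom_le_dom {s t : KNode κ} (h : s ≤ t) : s.dom ≤ t.dom := h.1

theorem val_eq_of_le {s t : KNode κ} (h : s ≤ t) {i : Ordinal.{u}} (hi : i < s.dom) :
    t.val i = s.val i :=
  h.2 i hi

theorem eq_of_le_of_dom_eq {s t : KNode κ} (h : s ≤ t) (hdom : s.dom = t.dom) : s = t :=
  KNode.ext hdom fun _ hi => (val_eq_of_le h hi).symm

theorem restrict_val (s : KNode κ) {β : Ordinal.{u}} (h : β ≤ s.dom) {i : Ordinal.{u}}
    (hi : i < β) : (s.restrict β h).val i = s.val i := if_pos hi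

theorem restrict_le (s : KNode κ) (β : Ordinal.{u}) (h : β ≤ s.dom) : s.restrict β h ≤ s :=
  ⟨h, fun _ hi => (restrict_val s h hi).symm⟩

theorem restrict_eq_of_le {s t : KNode κ} (h : s ≤ t) : t.restrict s.dom h.1 = s :=
  KNode.ext rfl fun _ hi => (restrict_val t h.1 hi).trans (val_eq_of_le h hi)

theorem restrict_eq_restrict_of_le {s t : KNode κ} (h : s ≤ t) {β : Ordinal.{u}}
    (hβ : β ≤ s.dom) : t.restrict β (hβ.trans h.1) = s.restrict β hβ :=
  KNode.ext rfl fun i hi => by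
    replace hi : i < β := hi
    rw [restrict_val t _ hi, restrict_val s hβ hi, val_eq_of_le h (hi.trans_le hβ)]

theorem le_restrict_of_le {s t : KNode κ} (h : s ≤ t) {β : Ordinal.{u}} (hsβ : s.dom ≤ β)
    (hβ : β ≤ t.dom) : s ≤ t.restrict β hβ :=
  ⟨hsβ, fun _ hi => (restrict_val t hβ (hi.trans_le hsβ)).trans (val_eq_of_le h hi)⟩

theorem exists_forall_le_of_isChain {C : Set (KNode κ)} (hC : IsChain (· ≤ ·) C)
    {δ : Ordinal.{u}} (hδ : δ < κ.ord) (hle : ∀ c ∈ C, c.dom ≤ δ)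
    (hcover : ∀ i < δ, ∃ c ∈ C, i < c.dom) : ∃ u : KNode κ, u.dom = δ ∧ ∀ c ∈ C, c ≤ u := by
  choose c hcC hc using hcover
  have hcoh : ∀ d (hd : d ∈ C) i (hi : i < d.dom),
      (c i (hi.trans_le (hle d hd))).val i = d.val i := fun d hd i hi => by
    rcases hC.total (hcC i _) hd with h | h
    · exact (val_eq_of_le h (hc i _)).symm
    · exact val_eq_of_le h hi
  refine ⟨⟨δ, hδ, fun i => if h : i < δ then (c i h).val i else 0, fun i hi => ?_,
    fun i hi => dif_neg hi⟩, rfl, fun d hd => ⟨hle d hd, fun i hi => ?_⟩⟩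
  · simp only [dif_pos hi]
    exact (c i hi).val_lt i (hc i hi)
  · simp only [dif_pos (hi.trans_le (hle d hd))]
    exact hcoh d hd i hi

end KNode

open KNode

variable {κ : Cardinal.{u}}

theorem add_one_lt_ord (hκ : ℵ₀ ≤ κ) {a : Ordinal.{u}} (ha : a < κ.ord) : a + 1 < κ.ord := by
  rw [← Order.succ_eq_add_one]
  exact (isSuccLimit_ord hκ).succ_lt ha

section Cobounded

theorem mk_Iic_lt_lift (hκ : ℵ₀ ≤ κ) {b : Ordinal.{u}} (hb : b < κ.ord) :
    #(Iic b) < lift.{u + 1} κ := by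
  rw [← Order.Iio_succ, Order.succ_eq_add_one, Cardinal.mk_Iio_ordinal, lift_lt]
  exact lt_ord.1 (add_one_lt_ord hκ hb)

theorem diff_mem_cobounded (hκ : ℵ₀ ≤ κ) {A B : Set Ordinal.{u}} (hA : A ∈ cobounded κ)
    (hB : #B < lift.{u + 1} κ) : A \ B ∈ cobounded κ := by
  refine ⟨sdiff_subset.trans hA.1, ?_⟩
  calc #(Iio κ.ord \ (A \ B) : Set Ordinal.{u})
      ≤ #((Iio κ.ord \ A) ∪ B : Set Ordinal.{u}) := by
        refine mk_le_mk_of_subset fun x ⟨hx, hxAB⟩ => ?_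
        by_cases hxA : x ∈ A
        · exact Or.inr (not_not.1 fun hxB => hxAB ⟨hxA, hxB⟩)
        · exact Or.inl ⟨hx, hxA⟩
    _ ≤ #(Iio κ.ord \ A : Set Ordinal.{u}) + #B := mk_union_le _ _
    _ < lift.{u + 1} κ := add_lt_of_lt (aleph0_le_lift.2 hκ) hA.2 hB

theorem inter_Ioi_mem_cobounded (hκ : ℵ₀ ≤ κ) {A : Set Ordinal.{u}} (hA : A ∈ cobounded κ)
    {b : Ordinal.{u}} (hb : b < κ.ord) : A ∩ Ioi b ∈ cobounded κ := by
  rw [← sdiff_compl, compl_Ioi]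
  exact diff_mem_cobounded hκ hA (mk_Iic_lt_lift hκ hb)

theorem nonempty_of_mem_cobounded {A : Set Ordinal.{u}}
    (hA : A ∈ cobounded κ) : A.Nonempty := by
  refine nonempty_iff_ne_empty.2 fun h => ?_
  have := hA.2
  rw [h, sdiff_empty, Cardinal.mk_Iio_ordinal, card_ord] at this
  exact lt_irrefl _ this

theorem exists_gt_of_mem_cobounded (hκ : ℵ₀ ≤ κ) {A : Set Ordinal.{u}}
    (hA : A ∈ cobounded κ) {b : Ordinal.{u}} (hb : b < κ.ord) : ∃ a ∈ A, b < a :=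
  nonempty_of_mem_cobounded (inter_Ioi_mem_cobounded hκ hA hb)

theorem exists_ne_of_mem_cobounded (hκ : ℵ₀ ≤ κ) {A : Set Ordinal.{u}}
    (hA : A ∈ cobounded κ) (a : Ordinal.{u}) : ∃ b ∈ A, b ≠ a := by
  have h1 : #({a} : Set Ordinal.{u}) < lift.{u + 1} κ := by
    rw [mk_singleton]
    exact one_lt_aleph0.trans_le (aleph0_le_lift.2 hκ)
  obtain ⟨b, hbA, hba⟩ := nonempty_of_mem_cobounded (diff_mem_cobounded hκ hA h1)
  exact ⟨b, hbA, hba⟩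

end Cobounded

section Trees

variable {p : Set (KNode κ)}

/-- The closure clause of `IsFPerfect`. -/
def IsClosedTree (p : Set (KNode κ)) : Prop :=
  ∀ s : KNode κ, Order.IsSuccLimit s.dom → (∀ β (h : β < s.dom), s.restrict β h.le ∈ p) → s ∈ p

theorem le_of_succSet_witness {s t : KNode κ} (hdom : t.dom = s.dom + 1)
    (hval : ∀ i < s.dom, t.val i = s.val i) : s ≤ t :=
  ⟨hdom ▸ (Order.lt_add_one_iff.2 le_rfl).le, hval⟩

theorem val_mem_succSet (hp : IsSubtree p) {s t : KNode κ} (ht : t ∈ p) (h : s ≤ t)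
    (hlt : s.dom < t.dom) : t.val s.dom ∈ succSet p s := by
  have hle : s.dom + 1 ≤ t.dom := Order.add_one_le_iff.2 hlt
  have hlt₁ : s.dom < s.dom + 1 := Order.lt_add_one_iff.2 le_rfl
  exact ⟨t.restrict _ hle, hp.2 t ht _ hle, rfl,
    fun i hi => (restrict_val t hle (hi.trans hlt₁)).trans (val_eq_of_le h hi),
    restrict_val t hle hlt₁⟩

theorem deg_mono {q : Set (KNode κ)} (h : q ⊆ p) (s : KNode κ) : deg q s ⊆ deg p s :=
  fun _ ⟨hi, t, ht, hrest⟩ => ⟨hi, t, h ht, hrest⟩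

theorem mem_deg_iff_of_le {s t : KNode κ} (h : s ≤ t) {i : Ordinal.{u}} (hi : i < s.dom) :
    i ∈ deg p s ↔ i ∈ deg p t := by
  have hagree : ∀ j ≤ i, t.val j = s.val j := fun j hj => val_eq_of_le h (hj.trans_lt hi)
  simp only [deg, mem_ofPred_eq, hi, hi.trans_le h.1, true_and]
  refine exists_congr fun r => and_congr_right fun _ => and_congr_right fun _ => ?_
  exact and_congr (forall₂_congr fun j hj => by rw [hagree j hj.le]) (by rw [hagree i le_rfl])

theorem mem_deg_iff (hp : IsSubtree p) {s : KNode κ} {i : Ordinal.{u}} (hi : i < s.dom) :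
    i ∈ deg p s ↔ ∃ b ∈ succSet p (s.restrict i hi.le), b ≠ s.val i := by
  constructor
  · rintro ⟨-, t, ht, hit, hagree, hne⟩
    refine ⟨t.val i, val_mem_succSet hp ht ⟨hit.le, fun j hj => ?_⟩ hit, hne⟩
    exact (hagree j hj).trans (restrict_val s hi.le hj).symm
  · rintro ⟨b, ⟨t, ht, hdom, hagree, rfl⟩, hne⟩
    refine ⟨hi, t, ht, hdom ▸ Order.lt_add_one_iff.2 le_rfl, fun j hj => ?_, hne⟩
    exact (hagree j hj).trans (restrict_val s hi.le hj)

theorem succSet_mem_of_mem_deg {F : Set (Set Ordinal.{u})} (hp : p ∈ PF κ F) {s : KNode κ}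
    (hs : s ∈ p) {i : Ordinal.{u}} (hi : i ∈ deg p s) :
    succSet p (s.restrict i hi.1.le) ∈ F := by
  have hsub : IsSubtree p := hp.1.1
  obtain ⟨b, hb, hne⟩ := (mem_deg_iff hsub hi.1).1 hi
  have hsi : s.val i ∈ succSet p (s.restrict i hi.1.le) :=
    val_mem_succSet hsub hs (restrict_le s i hi.1.le) hi.1
  rcases hp.2.1 _ (hsub.2 s hs i hi.1.le) with ⟨a, ha⟩ | hF
  · rw [ha] at hb hsi
    exact absurd (hb.trans hsi.symm) hne
  · exact hF

theorem exists_upperBound_of_isChain (hp : IsSubtree p) (hcl : IsClosedTree p)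
    {C : Set (KNode κ)} (hC : IsChain (· ≤ ·) C) (hCp : C ⊆ p) (hne : C.Nonempty)
    {β : Ordinal.{u}} (hβ : β < κ.ord) (hle : ∀ c ∈ C, c.dom ≤ β) :
    ∃ u ∈ p, u.dom ≤ β ∧ ∀ c ∈ C, c ≤ u := by
  have hbdd : BddAbove (dom '' C) := ⟨β, forall_mem_image.2 hle⟩
  set δ := sSup (dom '' C)
  have hδβ : δ ≤ β := csSup_le (hne.image _) (forall_mem_image.2 hle)
  have hcδ : ∀ c ∈ C, c.dom ≤ δ := fun c hc => le_csSup hbdd (mem_image_of_mem _ hc)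
  have hcover : ∀ i < δ, ∃ c ∈ C, i < c.dom := fun i hi => by
    obtain ⟨_, ⟨c, hc, rfl⟩, hic⟩ := exists_lt_of_lt_csSup (hne.image _) hi
    exact ⟨c, hc, hic⟩
  obtain ⟨u, hu, hcu⟩ := exists_forall_le_of_isChain hC (hδβ.trans_lt hβ) hcδ hcover
  refine ⟨u, ?_, hu.le.trans hδβ, hcu⟩
  by_cases hattained : ∃ c ∈ C, c.dom = δ
  · obtain ⟨c, hc, hcd⟩ := hattained
    rw [← eq_of_le_of_dom_eq (hcu c hc) (hcd.trans hu.symm)]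
    exact hCp hc
  · have hlt : ∀ c ∈ C, c.dom < δ := fun c hc => (hcδ c hc).lt_of_ne fun h => hattained ⟨c, hc, h⟩
    refine hcl u ?_ fun γ hγ => ?_
    · refine Ordinal.isSuccLimit_iff.2
        ⟨fun h0 => ?_, Order.isSuccPrelimit_of_succ_lt fun a ha => ?_⟩
      · obtain ⟨c, hc⟩ := hne
        have := hlt c hc
        rw [← hu, h0] at this
        simp at this
      · obtain ⟨c, hc, hac⟩ := hcover a (hu ▸ ha)
        exact hu ▸ (Order.succ_le_of_lt hac).trans_lt (hlt c hc)
    · obtain ⟨c, hc, hγc⟩ := hcover γ (hu ▸ hγ)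
      rw [restrict_eq_restrict_of_le (hcu c hc) hγc.le]
      exact hp.2 c (hCp hc) γ hγc.le

theorem exists_mem_dom_eq (hp : IsSubtree p) (hcl : IsClosedTree p)
    (hext : ∀ s ∈ p, ∃ t ∈ p, s ≤ t ∧ s.dom < t.dom) {β : Ordinal.{u}} (hβ : β < κ.ord) :
    ∃ s ∈ p, s.dom = β := by
  obtain ⟨r, hr⟩ := hp.1
  obtain ⟨m, ⟨hmp, hmβ⟩, hmax⟩ := zorn_le₀ {s | s ∈ p ∧ s.dom ≤ β} fun C hC hchain => by
    rcases C.eq_empty_or_nonempty with rfl | hne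
    · exact ⟨r.restrict 0 zero_le, ⟨hp.2 r hr 0 _, zero_le⟩, fun _ h => h.elim⟩
    · obtain ⟨u, hu, huβ, hcu⟩ := exists_upperBound_of_isChain hp hcl hchain
        (fun c hc => (hC hc).1) hne hβ fun c hc => (hC hc).2
      exact ⟨u, ⟨hu, huβ⟩, hcu⟩
  refine ⟨m, hmp, hmβ.antisymm (not_lt.1 fun hlt => ?_)⟩
  obtain ⟨t, ht, hmt, hlt'⟩ := hext m hmp
  have hle : m.dom + 1 ≤ t.dom := Order.add_one_le_iff.2 hlt'
  have := dom_le_dom <| hmax ⟨hp.2 t ht _ hle, Order.add_one_le_iff.2 hlt⟩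
    (le_restrict_of_le hmt (Order.lt_add_one_iff.2 le_rfl).le hle)
  exact (Order.lt_add_one_iff.2 le_rfl).not_ge this

end Trees

section Prune

variable {p : Set (KNode κ)} {f : Ordinal.{u} → Ordinal.{u}}

def prune (p : Set (KNode κ)) (f : Ordinal.{u} → Ordinal.{u}) : Set (KNode κ) :=
  {s | s ∈ p ∧ ∀ i ∈ deg p s, f i < s.val i}

theorem prune_subset : prune p f ⊆ p := fun _ hs => hs.1

theorem mem_prune_of_le {s t : KNode κ} (hs : s ∈ prune p f) (ht : t ∈ p) (h : s ≤ t)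
    (hnew : ∀ i ∈ deg p t, s.dom ≤ i → f i < t.val i) : t ∈ prune p f := by
  refine ⟨ht, fun i hi => ?_⟩
  by_cases his : i < s.dom
  · rw [val_eq_of_le h his]
    exact hs.2 i ((mem_deg_iff_of_le h his).2 hi)
  · exact hnew i hi (not_lt.1 his)

theorem restrict_mem_prune {s : KNode κ} (hp : IsSubtree p) (hs : s ∈ prune p f)
    (β : Ordinal.{u}) (h : β ≤ s.dom) : s.restrict β h ∈ prune p f := by
  refine ⟨hp.2 s hs.1 β h, fun i hi => ?_⟩
  rw [restrict_val s h hi.1]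
  exact hs.2 i ((mem_deg_iff_of_le (restrict_le s β h) hi.1).1 hi)

theorem prune_isSubtree (hp : IsSubtree p) : IsSubtree (prune p f) := by
  obtain ⟨r, hr⟩ := hp.1
  refine ⟨⟨r.restrict 0 zero_le, hp.2 r hr 0 _, fun i hi => ?_⟩, fun _ hs => restrict_mem_prune hp hs⟩
  exact absurd (hi.1 : i < 0) (not_lt_zero (a := i))

theorem prune_isClosedTree (hcl : IsClosedTree p) : IsClosedTree (prune p f) := by
  intro s hlim hres
  refine ⟨hcl s hlim fun β h => (hres β h).1, fun i hi => ?_⟩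
  have hi₁ : i + 1 < s.dom := by
    rw [← Order.succ_eq_add_one]
    exact hlim.succ_lt hi.1
  have hlt₁ : i < i + 1 := Order.lt_add_one_iff.2 le_rfl
  rw [← restrict_val s hi₁.le hlt₁]
  exact (hres _ hi₁).2 i ((mem_deg_iff_of_le (restrict_le s _ hi₁.le) hlt₁).2 hi)

theorem mem_succSet_prune_iff (hp : IsSubtree p) {s : KNode κ} (hs : s ∈ prune p f)
    {a : Ordinal.{u}} :
    a ∈ succSet (prune p f) s ↔
      a ∈ succSet p s ∧ ((∃ b ∈ succSet p s, b ≠ a) → f s.dom < a) := by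
  have hlt₁ : s.dom < s.dom + 1 := Order.lt_add_one_iff.2 le_rfl
  have key : ∀ t : KNode κ, t.dom = s.dom + 1 → s ≤ t →
      (s.dom ∈ deg p t ↔ ∃ b ∈ succSet p s, b ≠ t.val s.dom) := fun t hdom hst => by
    rw [mem_deg_iff hp (hdom ▸ hlt₁), restrict_eq_of_le hst]
  constructor
  · rintro ⟨t, ⟨htp, htf⟩, hdom, hval, rfl⟩
    have hst := le_of_succSet_witness hdom hval
    exact ⟨⟨t, htp, hdom, hval, rfl⟩, fun hb => htf _ ((key t hdom hst).2 hb)⟩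
  · rintro ⟨⟨t, htp, hdom, hval, rfl⟩, himp⟩
    have hst := le_of_succSet_witness hdom hval
    refine ⟨t, mem_prune_of_le hs htp hst fun i hi hsi => ?_, hdom, hval, rfl⟩
    obtain rfl : i = s.dom := hsi.antisymm' (Order.lt_add_one_iff.1 (hdom ▸ hi.1))
    exact himp ((key t hdom hst).1 hi)

theorem succSet_prune_of_mem_cobounded (hκ : ℵ₀ ≤ κ) (hp : IsSubtree p) {s : KNode κ}
    (hs : s ∈ prune p f) (hA : succSet p s ∈ cobounded κ) :
    succSet (prune p f) s = succSet p s ∩ Ioi (f s.dom) := by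
  ext a
  rw [mem_succSet_prune_iff hp hs]
  exact and_congr_right fun _ => ⟨fun h => h (exists_ne_of_mem_cobounded hκ hA a), fun h _ => h⟩

theorem succSet_prune_singleton_or_mem (hκ : ℵ₀ ≤ κ) (hf : ∀ i < κ.ord, f i < κ.ord)
    (hp : p ∈ PF κ (cobounded κ)) {s : KNode κ} (hs : s ∈ prune p f) :
    (∃ a, succSet (prune p f) s = {a}) ∨ succSet (prune p f) s ∈ cobounded κ := by
  rcases hp.2.1 s hs.1 with ⟨a, ha⟩ | hA
  · refine Or.inl ⟨a, ?_⟩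
    ext b
    rw [mem_succSet_prune_iff hp.1.1 hs, ha]
    exact ⟨And.left, fun hb => ⟨hb, fun ⟨c, hc, hcb⟩ => absurd (hc.trans hb.symm) hcb⟩⟩
  · rw [succSet_prune_of_mem_cobounded hκ hp.1.1 hs hA]
    exact Or.inr (inter_Ioi_mem_cobounded hκ hA (hf _ s.dom_lt))

/-- At a splitting level `i` of `s`, some successor of `s↾i` in `p` lies above both `f i` and
`s i`, and it survives the pruning. -/
theorem deg_prune (hκ : ℵ₀ ≤ κ) (hf : ∀ i < κ.ord, f i < κ.ord)
    (hp : p ∈ PF κ (cobounded κ)) {s : KNode κ} (hs : s ∈ prune p f) :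
    deg (prune p f) s = deg p s := by
  have hsub : IsSubtree p := hp.1.1
  refine (deg_mono prune_subset s).antisymm fun i hi => ?_
  obtain ⟨a, ha, hfa⟩ := exists_gt_of_mem_cobounded hκ (succSet_mem_of_mem_deg hp hs.1 hi)
    (max_lt (hf i (hi.1.trans s.dom_lt)) (s.val_lt i hi.1))
  have hsi := restrict_mem_prune hsub hs i hi.1.le
  refine (mem_deg_iff (prune_isSubtree hsub) hi.1).2 ⟨a, ?_, (le_max_right _ _).trans_lt hfa |>.ne'⟩
  exact (mem_succSet_prune_iff hsub hsi).2 ⟨ha, fun _ => (le_max_left _ _).trans_lt hfa⟩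

/-- A splitting extension of `s` of least height has no splitting level above `dom s`, so it
stays in the pruned tree. -/
theorem exists_le_splitting_prune (hκ : ℵ₀ ≤ κ) (hf : ∀ i < κ.ord, f i < κ.ord)
    (hp : p ∈ PF κ (cobounded κ)) {s : KNode κ} (hs : s ∈ prune p f) :
    ∃ t ∈ prune p f, s ≤ t ∧ succSet (prune p f) t ∈ cobounded κ := by
  obtain ⟨t, ⟨htp, hst, htA⟩, hmin⟩ := (InvImage.wf dom wellFounded_lt).has_min
    {t | t ∈ p ∧ s ≤ t ∧ succSet p t ∈ cobounded κ}
    (let ⟨t, ht, hd, hval, hA⟩ := hp.1.2.2.1 s hs.1; ⟨t, ht, ⟨hd, hval⟩, hA⟩)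
  have htq : t ∈ prune p f := mem_prune_of_le hs htp hst fun i hi hsi =>
    absurd hi.1 <| hmin (t.restrict i hi.1.le)
      ⟨hp.1.1.2 t htp i _, le_restrict_of_le hst hsi _, succSet_mem_of_mem_deg hp htp hi⟩
  refine ⟨t, htq, hst, ?_⟩
  rw [succSet_prune_of_mem_cobounded hκ hp.1.1 htq htA]
  exact inter_Ioi_mem_cobounded hκ htA (hf _ t.dom_lt)

theorem exists_lt_dom_prune (hκ : ℵ₀ ≤ κ) (hf : ∀ i < κ.ord, f i < κ.ord)
    (hp : p ∈ PF κ (cobounded κ)) {s : KNode κ} (hs : s ∈ prune p f) :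
    ∃ t ∈ prune p f, s ≤ t ∧ s.dom < t.dom := by
  obtain ⟨t, ht, hst, hA⟩ := exists_le_splitting_prune hκ hf hp hs
  obtain ⟨_, r, hr, hdom, hval, -⟩ := nonempty_of_mem_cobounded hA
  refine ⟨r, hr, hst.trans (le_of_succSet_witness hdom hval), ?_⟩
  exact hdom ▸ hst.1.trans_lt (Order.lt_add_one_iff.2 le_rfl)

theorem prune_mem_PF (hκ : ℵ₀ ≤ κ) (hf : ∀ i < κ.ord, f i < κ.ord)
    (hp : p ∈ PF κ (cobounded κ)) : prune p f ∈ PF κ (cobounded κ) := by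
  have hsub := prune_isSubtree (f := f) hp.1.1
  have hcl := prune_isClosedTree (f := f) hp.1.2.2.2
  refine ⟨⟨hsub, fun β hβ => ?_, fun s hs => ?_, hcl⟩,
    fun s hs => succSet_prune_singleton_or_mem hκ hf hp hs, fun s hs => ?_⟩
  · obtain ⟨s, hs, rfl⟩ :=
      exists_mem_dom_eq hsub hcl (fun s hs => exists_lt_dom_prune hκ hf hp hs) hβ
    exact ⟨s, hs, le_rfl⟩
  · obtain ⟨t, ht, hst, hA⟩ := exists_le_splitting_prune hκ hf hp hs
    exact ⟨t, ht, hst.1, hst.2, hA⟩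
  · rw [deg_prune hκ hf hp hs]
    exact hp.2.2 s hs.1

end Prune

theorem stmt_2_general (κ : Cardinal.{u}) (hκ : ℵ₀ ≤ κ)
    (f : Ordinal.{u} → Ordinal.{u}) (hf : ∀ i, i < κ.ord → f i < κ.ord) :
    ∀ p ∈ PF κ (cobounded κ), ∃ q ∈ Dset κ f, q ⊆ p := fun p hp =>
  ⟨prune p f, ⟨prune_mem_PF hκ hf hp, fun _ hs i hi => hs.2 i (deg_mono prune_subset _ hi)⟩,
    prune_subset⟩

/-- For every `f : κ → κ`, the set `D_f` is dense in `P(F*_κ)`. -/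
theorem stmt_2 (κ : Cardinal.{u}) (hκ : ℵ₀ ≤ κ) (hpow : κ ^< κ = κ)
    (f : Ordinal.{u} → Ordinal.{u}) (hf : ∀ i, i < κ.ord → f i < κ.ord) :
    ∀ p ∈ PF κ (cobounded κ), ∃ q ∈ Dset κ f, q ⊆ p :=
  stmt_2_general κ hκ f hf
end
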